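/- Let M = (V, D) be a delta-matroid and v ∈ V with d_M = d_{M*v}. Then (1) no inclusion-minimal set of M contains v, (2) the family of inclusion-minimal sets of M equals the family of inclusion-minimal sets of M*v, and (3) d_{M∂v} = d_M + 1. -/

import Mathlib

open scoped symmDiff

variable {V : Type*} [DecidableEq V] [Fintype V]

/-- Distance from `X` to the set system with family `D`. -/
noncomputable def dSS (D : Set (Finset V)) (X : Finset V) : ℕ :=
  sInf ((fun Y => (X ∆ Y).card) '' D)

/-- Pivot (twist) of a set-system family on `X`. -/
def pivotSS (D : Set (Finset V)) (X : Finset V) : Set (Finset V) :=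
  (fun Y => Y ∆ X) '' D

/-- Loop complementation on `v`. -/
def lcSS (D : Set (Finset V)) (v : V) : Set (Finset V) :=
  D ∆ ((fun Z => Z ∪ {v}) '' {Z ∈ D | v ∉ Z})

/-- Dual pivot on `v`. -/
def dpSS (D : Set (Finset V)) (v : V) : Set (Finset V) :=
  D ∆ ((fun Z => Z \ {v}) '' {Z ∈ D | v ∈ Z})

/-- Delta-matroid: proper set system with the symmetric exchange axiom. -/
def DeltaMatroid (D : Set (Finset V)) : Prop :=
  D.Nonempty ∧ ∀ X ∈ D, ∀ Y ∈ D, ∀ u ∈ X ∆ Y, ∃ v ∈ X ∆ Y, X ∆ {u, v} ∈ D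

/-- Inclusion-minimal members. -/
def minFam (D : Set (Finset V)) : Set (Finset V) :=
  {X ∈ D | ∀ Y ∈ D, Y ⊆ X → Y = X}

/-- Inclusion-maximal members. -/
def maxFam (D : Set (Finset V)) : Set (Finset V) :=
  {X ∈ D | ∀ Y ∈ D, X ⊆ Y → Y = X}

/-- Members of minimum cardinality. -/
def minCardFam (D : Set (Finset V)) : Set (Finset V) :=
  {X ∈ D | ∀ Y ∈ D, X.card ≤ Y.card}

/-- Members of maximum cardinality. -/
def maxCardFam (D : Set (Finset V)) : Set (Finset V) :=
  {X ∈ D | ∀ Y ∈ D, Y.card ≤ X.card}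

/-- All members have the same cardinality. -/
def Equicardinal (F : Set (Finset V)) : Prop :=
  ∀ X ∈ F, ∀ Y ∈ F, X.card = Y.card

/-- Restriction of the family to subsets of `X`. -/
def restrictSS (D : Set (Finset V)) (X : Finset V) : Set (Finset V) :=
  {Y ∈ D | Y ⊆ X}

/-! In a delta-matroid, a member smaller than `X` can be pushed inside `X` by symmetric
exchanges, so the inclusion-minimal members are exactly the members of minimum size `d`.
If `d_M = d_{M*v}`, every member containing `v` has size at least `d + 1`, and a member `Y ∋ v`
of size `d + 1` has `Y \ {v} ∈ M`, because its members of size `d` below it avoid `v`. The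
hypothesis is symmetric in `M` and `M*v`, so dually `X ∪ {v} ∈ M` for every member `X` of size `d`.
Hence `M` and `M*v` have the same members of size `d`, and in `M∂v` these members all cancel
while the members of size `d + 1` containing `v` survive. -/

section
omit [Fintype V]

theorem Finset.symmDiff_singleton_of_mem {X : Finset V} {v : V} (hv : v ∈ X) :
    X ∆ {v} = X.erase v := by
  ext x
  by_cases hx : x = v <;> simp [Finset.mem_symmDiff, hx, hv]

theorem Finset.symmDiff_singleton_of_notMem {X : Finset V} {v : V} (hv : v ∉ X) :
    X ∆ {v} = insert v X := by
  ext x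
  by_cases hx : x = v <;> simp [Finset.mem_symmDiff, hx, hv]

theorem Finset.card_symmDiff_pair_le {Y : Finset V} {u : V} (hu : u ∈ Y) (w : V) :
    (Y ∆ {u, w}).card ≤ Y.card :=
  calc (Y ∆ {u, w}).card ≤ (insert w (Y.erase u)).card := by
        refine Finset.card_le_card fun x hx => ?_
        by_cases hxw : x = w <;> aesop (add simp Finset.mem_symmDiff)
    _ ≤ (Y.erase u).card + 1 := Finset.card_insert_le _ _
    _ = Y.card := Finset.card_erase_add_one hu

theorem mem_pivotSS {D : Set (Finset V)} {T X : Finset V} : X ∈ pivotSS D T ↔ X ∆ T ∈ D := by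
  constructor
  · rintro ⟨Y, hY, rfl⟩
    rwa [symmDiff_symmDiff_cancel_right]
  · intro hX
    exact ⟨X ∆ T, hX, symmDiff_symmDiff_cancel_right T X⟩

theorem pivotSS_pivotSS (D : Set (Finset V)) (T : Finset V) : pivotSS (pivotSS D T) T = D := by
  ext X
  rw [mem_pivotSS, mem_pivotSS, symmDiff_symmDiff_cancel_right]

theorem DeltaMatroid.pivot {D : Set (Finset V)} (hD : DeltaMatroid D) (T : Finset V) :
    DeltaMatroid (pivotSS D T) := by
  refine ⟨hD.1.image _, fun X hX Y hY u hu => ?_⟩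
  rw [mem_pivotSS] at hX hY
  have hXY : (X ∆ T) ∆ (Y ∆ T) = X ∆ Y := by
    rw [symmDiff_symmDiff_symmDiff_comm, symmDiff_self, symmDiff_bot]
  obtain ⟨w, hw, hXw⟩ := hD.2 _ hX _ hY u (hXY ▸ hu)
  exact ⟨w, hXY ▸ hw, mem_pivotSS.mpr (symmDiff_right_comm X T {u, w} ▸ hXw)⟩

/-- Exchanging towards `X` an element of `Y \ X` shrinks `Y \ X` without increasing `|Y|`,
so a member smaller than `X` can be pushed inside `X`. -/
theorem DeltaMatroid.exists_subset_card_lt {D : Set (Finset V)} (hD : DeltaMatroid D)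
    {X Y : Finset V} (hX : X ∈ D) (hY : Y ∈ D) (hYX : Y.card < X.card) :
    ∃ W ∈ D, W ⊆ X ∧ W.card < X.card := by
  induction h : (Y \ X).card using Nat.strong_induction_on generalizing Y with
  | _ n ih =>
  by_cases hsub : Y ⊆ X
  · exact ⟨Y, hY, hsub, hYX⟩
  obtain ⟨u, huY, huX⟩ := Finset.not_subset.mp hsub
  obtain ⟨w, hw, hYw⟩ := hD.2 Y hY X hX u (Finset.mem_symmDiff.mpr (Or.inl ⟨huY, huX⟩))
  refine ih _ ?_ hYw ((Finset.card_symmDiff_pair_le huY w).trans_lt hYX) rfl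
  calc ((Y ∆ {u, w}) \ X).card ≤ ((Y \ X).erase u).card := by
        refine Finset.card_le_card fun x hx => ?_
        by_cases hxw : x = w <;> aesop (add simp Finset.mem_symmDiff)
    _ < n := h ▸ Finset.card_erase_lt_of_mem (Finset.mem_sdiff.mpr ⟨huY, huX⟩)

theorem DeltaMatroid.minFam_eq_minCardFam {D : Set (Finset V)} (hD : DeltaMatroid D) :
    minFam D = minCardFam D := by
  ext X
  constructor
  · rintro ⟨hX, hmin⟩
    refine ⟨hX, fun Y hY => not_lt.mp fun hYX => ?_⟩
    obtain ⟨W, hW, hWX, hWc⟩ := hD.exists_subset_card_lt hX hY hYX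
    exact hWc.ne (congrArg Finset.card (hmin W hW hWX))
  · rintro ⟨hX, hmin⟩
    exact ⟨hX, fun Y hY hYX => Finset.eq_of_subset_of_card_le hYX (hmin Y hY)⟩

theorem dSS_empty (D : Set (Finset V)) : dSS D ∅ = sInf (Finset.card '' D) := by
  simp only [dSS, ← Finset.bot_eq_empty, bot_symmDiff]

theorem dSS_empty_le {D : Set (Finset V)} {X : Finset V} (hX : X ∈ D) : dSS D ∅ ≤ X.card :=
  dSS_empty D ▸ Nat.sInf_le ⟨X, hX, rfl⟩

theorem exists_card_eq_dSS_empty {D : Set (Finset V)} (hD : D.Nonempty) :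
    ∃ X ∈ D, X.card = dSS D ∅ := by
  rw [dSS_empty]
  exact Nat.sInf_mem (hD.image _)

theorem mem_minCardFam_iff {D : Set (Finset V)} {X : Finset V} :
    X ∈ minCardFam D ↔ X ∈ D ∧ X.card = dSS D ∅ := by
  constructor
  · rintro ⟨hX, hmin⟩
    obtain ⟨Y, hY, hYc⟩ := exists_card_eq_dSS_empty ⟨X, hX⟩
    exact ⟨hX, le_antisymm (hYc ▸ hmin Y hY) (dSS_empty_le hX)⟩
  · rintro ⟨hX, hc⟩
    exact ⟨hX, fun Y hY => hc ▸ dSS_empty_le hY⟩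

theorem notMem_of_card_le_dSS_pivotSS {D : Set (Finset V)} {X : Finset V} {v : V} (hX : X ∈ D)
    (hc : X.card ≤ dSS (pivotSS D {v}) ∅) : v ∉ X := by
  intro hv
  have hmem : X.erase v ∈ pivotSS D {v} := by
    rw [mem_pivotSS, Finset.symmDiff_singleton_of_notMem (Finset.notMem_erase v X),
      Finset.insert_erase hv]
    exact hX
  have := (dSS_empty_le hmem).trans_lt (Finset.card_erase_lt_of_mem hv)
  omega

theorem DeltaMatroid.erase_mem_of_card_eq {D : Set (Finset V)} (hD : DeltaMatroid D) {v : V}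
    (hd : dSS D ∅ ≤ dSS (pivotSS D {v}) ∅) {Y : Finset V} (hY : Y ∈ D) (hv : v ∈ Y)
    (hc : Y.card = dSS D ∅ + 1) : Y.erase v ∈ D := by
  obtain ⟨X, hX, hXc⟩ := exists_card_eq_dSS_empty hD.1
  obtain ⟨W, hW, hWY, hWc⟩ := hD.exists_subset_card_lt hY hX (by omega)
  have hWd : W.card = dSS D ∅ := by
    have := dSS_empty_le hW
    omega
  have hWY' : W ⊆ Y.erase v :=
    Finset.subset_erase.mpr ⟨hWY, notMem_of_card_le_dSS_pivotSS hW (hWd ▸ hd)⟩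
  rwa [← Finset.eq_of_subset_of_card_le hWY' (by rw [Finset.card_erase_of_mem hv]; omega)]

/-- `erase_mem_of_card_eq` applied to `M*v`. -/
theorem DeltaMatroid.insert_mem_of_card_eq {D : Set (Finset V)} (hD : DeltaMatroid D) {v : V}
    (h : dSS D ∅ = dSS (pivotSS D {v}) ∅) {X : Finset V} (hX : X ∈ D)
    (hc : X.card = dSS D ∅) : insert v X ∈ D := by
  have hvX : v ∉ X := notMem_of_card_le_dSS_pivotSS hX (by omega)
  have hmem : insert v X ∈ pivotSS D {v} := by
    rwa [mem_pivotSS, Finset.symmDiff_singleton_of_mem (Finset.mem_insert_self v X),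
      Finset.erase_insert hvX]
  have := (hD.pivot {v}).erase_mem_of_card_eq (by rw [pivotSS_pivotSS]; exact h.ge) hmem
    (Finset.mem_insert_self v X) (by rw [Finset.card_insert_of_notMem hvX]; omega)
  rwa [Finset.erase_insert hvX, mem_pivotSS, Finset.symmDiff_singleton_of_notMem hvX] at this

theorem DeltaMatroid.minCardFam_subset_pivot {D : Set (Finset V)} (hD : DeltaMatroid D) {v : V}
    (h : dSS D ∅ = dSS (pivotSS D {v}) ∅) : minCardFam D ⊆ minCardFam (pivotSS D {v}) := by
  intro X hX
  obtain ⟨hXD, hXc⟩ := mem_minCardFam_iff.mp hX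
  have hvX : v ∉ X := notMem_of_card_le_dSS_pivotSS hXD (by omega)
  refine mem_minCardFam_iff.mpr ⟨?_, by omega⟩
  rw [mem_pivotSS, Finset.symmDiff_singleton_of_notMem hvX]
  exact hD.insert_mem_of_card_eq h hXD hXc

theorem DeltaMatroid.dSS_dpSS {D : Set (Finset V)} (hD : DeltaMatroid D) {v : V}
    (h : dSS D ∅ = dSS (pivotSS D {v}) ∅) : dSS (dpSS D v) ∅ = dSS D ∅ + 1 := by
  obtain ⟨X₀, hX₀, hX₀c⟩ := exists_card_eq_dSS_empty hD.1
  have hvX₀ : v ∉ X₀ := notMem_of_card_le_dSS_pivotSS hX₀ (by omega)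
  have hmem : insert v X₀ ∈ dpSS D v := by
    refine Set.mem_symmDiff.mpr (Or.inl ⟨hD.insert_mem_of_card_eq h hX₀ hX₀c, ?_⟩)
    rintro ⟨Z, -, hZ⟩
    simpa using congrArg (v ∈ ·) hZ
  refine le_antisymm ?_ ?_
  · calc dSS (dpSS D v) ∅ ≤ (insert v X₀).card := dSS_empty_le hmem
      _ = dSS D ∅ + 1 := by rw [Finset.card_insert_of_notMem hvX₀, hX₀c]
  obtain ⟨X, hX, hXc⟩ := exists_card_eq_dSS_empty ⟨_, hmem⟩
  rw [← hXc]
  rcases Set.mem_symmDiff.mp hX with ⟨hXD, hXE⟩ | ⟨⟨Z, ⟨hZD, hvZ⟩, rfl⟩, hXD⟩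
  · by_contra! hlt
    have hXd : X.card = dSS D ∅ := le_antisymm (by omega) (dSS_empty_le hXD)
    have hvX : v ∉ X := notMem_of_card_le_dSS_pivotSS hXD (by omega)
    refine hXE ⟨insert v X, ⟨hD.insert_mem_of_card_eq h hXD hXd, Finset.mem_insert_self v X⟩, ?_⟩
    simp only [Finset.sdiff_singleton_eq_erase, Finset.erase_insert hvX]
  · simp only [Finset.sdiff_singleton_eq_erase] at hXD ⊢
    have hZ : dSS D ∅ + 1 ≤ Z.card := by
      by_contra! hlt
      exact notMem_of_card_le_dSS_pivotSS hZD (by omega) hvZ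
    have hZ' : Z.card ≠ dSS D ∅ + 1 := fun hc => hXD (hD.erase_mem_of_card_eq h.le hZD hvZ hc)
    rw [Finset.card_erase_of_mem hvZ]
    omega

theorem DeltaMatroid.minFam_pivot {D : Set (Finset V)} (hD : DeltaMatroid D) {v : V}
    (h : dSS D ∅ = dSS (pivotSS D {v}) ∅) : minFam (pivotSS D {v}) = minFam D := by
  rw [hD.minFam_eq_minCardFam, (hD.pivot {v}).minFam_eq_minCardFam]
  refine subset_antisymm ?_ (hD.minCardFam_subset_pivot h)
  have := (hD.pivot {v}).minCardFam_subset_pivot (by rw [pivotSS_pivotSS]; exact h.symm)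
  rwa [pivotSS_pivotSS] at this

end

/-- for a delta-matroid `M` and `v` with `d_M = d_{M*v}`:
(1) no inclusion-minimal set of `M` contains `v`,
(2) `min(M) = min(M*v)`, and (3) `d_{M∂v} = d_M + 1`. -/
theorem min_dual_pivot_equal_dist (D : Set (Finset V)) (hDM : DeltaMatroid D)
    (v : V) (h : dSS D ∅ = dSS (pivotSS D {v}) ∅) :
    (∀ Z ∈ minFam D, v ∉ Z) ∧
    minFam D = minFam (pivotSS D {v}) ∧
    dSS (dpSS D v) ∅ = dSS D ∅ + 1 := by
  refine ⟨fun Z hZ => ?_, (hDM.minFam_pivot h).symm, hDM.dSS_dpSS h⟩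
  obtain ⟨hZD, hZc⟩ := mem_minCardFam_iff.mp (hDM.minFam_eq_minCardFam ▸ hZ)
  exact notMem_of_card_le_dSS_pivotSS hZD (hZc.trans h).le
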